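/- arXiv:1010.1820 — 3 statements merged into one kernel-verified Lean document; each statement's English description precedes it below -/
import Mathlib

section
/- There exists a vector (a,b,c,u) ∈ ℝ⁴ with all coordinates positive such that M·(a,b,c,u) = λ·(a,b,c,u) for some real λ with 0 < λ < 1, where M = [[3,1,-1,-4],[-1,2,0,0],[-2,-2,1,4],[3,2,-1,-5]]. -/
open Matrix

theorem stmt_9 :
    let M : Matrix (Fin 4) (Fin 4) ℝ :=
      !![3, 1, -1, -4; -1, 2, 0, 0; -2, -2, 1, 4; 3, 2, -1, -5]
    ∃ v : Fin 4 → ℝ, (∀ i, 0 < v i) ∧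
      ∃ lam : ℝ, 0 < lam ∧ lam < 1 ∧ M.mulVec v = lam • v := by
  intro M
  -- find a root of x^3 - 4x + 1 in (0, 1/2)
  obtain ⟨l, hl, hfl⟩ : ∃ l ∈ Set.Icc (0:ℝ) (1/2), l^3 - 4*l + 1 = 0 := by
    have hc : ContinuousOn (fun x : ℝ => x^3 - 4*x + 1) (Set.Icc 0 (1/2)) := by
      fun_prop
    have := intermediate_value_Icc' (by norm_num : (0:ℝ) ≤ 1/2) hc
    have h0 : (0:ℝ) ∈ Set.Icc ((1/2:ℝ)^3 - 4*(1/2) + 1) ((0:ℝ)^3 - 4*0 + 1) := by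
      constructor <;> norm_num
    obtain ⟨l, hl, hfl⟩ := this h0
    exact ⟨l, hl, hfl⟩
  obtain ⟨hl0, hl2⟩ := hl
  have hl0' : 0 < l := by
    rcases hl0.lt_or_eq with h | h
    · exact h
    · exfalso; rw [← h] at hfl; norm_num at hfl
  refine ⟨![11 - l - 2*l^2, 5 + 4*l + l^2, 8 - 2*l - 4*l^2, 7], ?_, l, hl0', ?_, ?_⟩
  · intro i
    fin_cases i <;> simp <;> nlinarith
  · nlinarith
  · funext i
    fin_cases i <;>
      simp [M, Matrix.mulVec, dotProduct, Fin.sum_univ_four] <;>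
      nlinarith [hfl, sq_nonneg l]
end

section
/- Let (a,b,c,u) be a positive eigenvector of M = [[3,1,-1,-4],[-1,2,0,0],[-2,-2,1,4],[3,2,-1,-5]] with eigenvalue λ ∈ (0,1), normalized so that a + b + c = 1. Then 0.44 < a < 0.45, 0.25 < b < 0.26, 0.30 < c < 0.31, and 0.29 < u < 0.30. -/
open Matrix

set_option maxHeartbeats 1000000

theorem stmt_10 (a b c u lam : ℝ)
    (ha : 0 < a) (hb : 0 < b) (hc : 0 < c) (hu : 0 < u)
    (hlam : 0 < lam) (hlam1 : lam < 1)
    (heig :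
      (!![3, 1, -1, -4; -1, 2, 0, 0; -2, -2, 1, 4; 3, 2, -1, -5] :
        Matrix (Fin 4) (Fin 4) ℝ).mulVec ![a, b, c, u] = lam • ![a, b, c, u])
    (hnorm : a + b + c = 1) :
    (0.44 < a ∧ a < 0.45) ∧ (0.25 < b ∧ b < 0.26) ∧
      (0.30 < c ∧ c < 0.31) ∧ (0.29 < u ∧ u < 0.30) := by
  have h0 := congrFun heig 0
  have h1 := congrFun heig 1
  have h2 := congrFun heig 2
  have h3 := congrFun heig 3
  simp [mulVec, dotProduct, Fin.sum_univ_four] at h0 h1 h2 h3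
  clear heig
  have hbl : b = lam := by linear_combination h0 + h1 + h2 + lam * hnorm
  subst hbl
  have hal : a = (2 - b) * b := by linear_combination -h1
  have hcl : c = 1 - 3 * b + b ^ 2 := by linear_combination hnorm + h1
  have hul : 4 * u = b ^ 3 - 6 * b ^ 2 + 10 * b - 1 := by
    linear_combination -h0 + (3 - b) * hal - hcl
  have hq : (b - 1) * (b ^ 3 - 4 * b + 1) = 0 := by
    linear_combination (-4) * h3 + 12 * hal - 4 * hcl - (5 + b) * hul
  have hcubic : b ^ 3 - 4 * b + 1 = 0 := by
    rcases mul_eq_zero.mp hq with h | h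
    · linarith
    · exact h
  have hb1 : (0.253 : ℝ) < b := by nlinarith [hcubic, sq_nonneg b, sq_nonneg (b - 1)]
  have hb2 : b < (0.255 : ℝ) := by nlinarith [hcubic, sq_nonneg b, sq_nonneg (b - 1)]
  have h253 : (0:ℝ) < b - 0.253 := by linarith
  have h255 : (0:ℝ) < 0.255 - b := by linarith
  refine ⟨⟨?_, ?_⟩, ⟨by linarith, by linarith⟩, ⟨?_, ?_⟩, ⟨?_, ?_⟩⟩
  · nlinarith [hal, mul_pos h253 h255, mul_pos h253 h253]
  · nlinarith [hal, mul_pos h253 h255, mul_pos h255 h255]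
  · nlinarith [hcl, mul_pos h255 (by linarith : (0:ℝ) < 2.745 - b)]
  · nlinarith [hcl, mul_pos h253 (by linarith : (0:ℝ) < 2.747 - b)]
  · have key1 : b ^ 2 - 5.747 * b + 8.546009 > 0 := by nlinarith [sq_nonneg b]
    have e1 : (b - 0.253) * (b ^ 2 - 5.747 * b + 8.546009)
        = b ^ 3 - 6 * b ^ 2 + 10 * b - 2.162140277 := by ring
    linarith [hul, mul_pos h253 key1, e1.ge, e1.le]
  · have key2 : b ^ 2 - 5.745 * b + 8.535025 > 0 := by nlinarith [sq_nonneg b]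
    have e2 : (0.255 - b) * (b ^ 2 - 5.745 * b + 8.535025)
        = -b ^ 3 + 6 * b ^ 2 - 10 * b + 2.176431375 := by ring
    linarith [hul, mul_pos h255 key2, e2.ge, e2.le]
end

section
/- Let (a,b,c,u) be a positive eigenvector of M = [[3,1,-1,-4],[-1,2,0,0],[-2,-2,1,4],[3,2,-1,-5]] with eigenvalue λ ∈ (0,1). Then b < u < u + c, a < u + c, a > b, and u < a + b - u. -/
open Matrix

theorem stmt_11 (a b c u lam : ℝ)
    (ha : 0 < a) (hb : 0 < b) (hc : 0 < c) (hu : 0 < u)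
    (hlam : 0 < lam) (hlam1 : lam < 1)
    (heig :
      (!![3, 1, -1, -4; -1, 2, 0, 0; -2, -2, 1, 4; 3, 2, -1, -5] :
        Matrix (Fin 4) (Fin 4) ℝ).mulVec ![a, b, c, u] = lam • ![a, b, c, u]) :
    b < u ∧ u < u + c ∧ a < u + c ∧ a > b ∧ u < a + b - u := by
  have e1 := congrFun heig 0
  have e2 := congrFun heig 1
  have e3 := congrFun heig 2
  have e4 := congrFun heig 3
  simp [mulVec, dotProduct, Fin.sum_univ_four] at e1 e2 e3 e4
  have ha2 : a = (2 - lam) * b := by linarith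
  have hc2 : lam * c = (1 - 3*lam + lam^2) * b := by
    linear_combination -e1 - e3 + (1 - lam) * ha2
  have hu2 : (1 + lam) * u = (1 + 2*lam - lam^2) * b := by
    linear_combination e1 - e4 + lam * ha2
  have hpoly : (lam - 1) * (lam^3 - 4*lam + 1) * b = 0 := by
    linear_combination lam*(1+lam)*e1 - lam*(1+lam)*(3-lam)*ha2 + (1+lam)*hc2 + 4*lam*hu2
  have hcube : lam^3 - 4*lam + 1 = 0 := by
    rcases mul_eq_zero.mp hpoly with h | h
    · rcases mul_eq_zero.mp h with h' | h'
      · linarith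
      · exact h'
    · linarith
  have hab : a > b := by nlinarith [mul_pos (show (0:ℝ) < 1 - lam by linarith) hb]
  have hbu : b < u := by
    nlinarith [mul_pos (mul_pos hlam (show (0:ℝ) < 2 - lam by linarith)) hb]
  have key : (1 + lam) * lam * (u + c - a) = lam * (1 - lam) * b := by
    linear_combination lam * hu2 + (1 + lam) * hc2 - lam * (1 + lam) * ha2 + b * hcube
  have hauc : a < u + c := by
    nlinarith [key, mul_pos (mul_pos hlam (show (0:ℝ) < 1 - lam by linarith)) hb,
      mul_pos (show (0:ℝ) < 1 + lam by linarith) hlam]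
  have key2 : (1 + lam) * (a + b - 2*u) = (1 - lam)^2 * b := by
    linear_combination (1 + lam) * ha2 - 2 * hu2
  have hlast : u < a + b - u := by
    nlinarith [key2, mul_pos (mul_pos (show (0:ℝ) < 1 - lam by linarith)
      (show (0:ℝ) < 1 - lam by linarith)) hb]
  exact ⟨hbu, by linarith, hauc, hab, hlast⟩
end
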